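/- arXiv:2410.05700 — 4 statements merged into one kernel-verified Lean document; each statement's English description precedes it below -/
import Mathlib

section
/- Let H : K -> R^{d x d} be a self-concordant matrix function satisfying (1 - ||u-v||_{H(u)})^2 H(v) <= H(u) <= (1 + ||u-v||_{H(u)})^2 H(v) for all u,v with ||u-v||_{H(u)} <= 1. Define Phi(u) = alpha^{-1} H(u) + eta^{-1} I_d for alpha in (0,1), eta > 0. Then for any u, v in K with ||u-v||_{Phi(u)} <= alpha^{-1/2}, we have (1 - alpha^{1/2} ||u-v||_{Phi(u)})^2 Phi(v) <= Phi(u) <= (1 + alpha^{1/2} ||u-v||_{Phi(u)})^2 Phi(v). -/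
/-! Since `α Φ(u) = H(u) + (α/η) I ⪰ H(u)`, the `H(u)`-norm of `u - v` is at most
`s = √α ‖u - v‖_{Φ(u)} ≤ 1`, so self-concordance applies with a constant dominated by `s`.
Scaling the resulting bounds between `H(u)` and `H(v)` by `α⁻¹` and adding `η⁻¹ I`, which is
squeezed by `(1 - s)² ≤ 1 ≤ (1 + s)²`, gives the bounds between `Φ(u)` and `Φ(v)`. -/

open Matrix
open scoped MatrixOrder

noncomputable def matNorm {d : ℕ} (M : Matrix (Fin d) (Fin d) ℝ) (w : Fin d → ℝ) : ℝ :=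
  Real.sqrt (w ⬝ᵥ M.mulVec w)

section OrderedModule

variable {E : Type*} [AddCommGroup E] [PartialOrder E] [IsOrderedAddMonoid E] [Module ℝ E]
  [IsOrderedModule ℝ E] {A B P : E} {a b c c' : ℝ}

theorem smul_add_smul_le_add_smul_of_smul_le (hB : 0 ≤ B) (hP : 0 ≤ P) (ha : 0 ≤ a)
    (hb : 0 ≤ b) (hc' : c' ≤ c) (hc'1 : c' ≤ 1) (h : c • B ≤ A) :
    c' • (a • B + b • P) ≤ a • A + b • P := by
  calc c' • (a • B + b • P) = a • (c' • B) + c' • (b • P) := by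
        rw [smul_add, smul_comm c' a]
    _ ≤ a • A + (1 : ℝ) • (b • P) := by
        gcongr
        exact (smul_le_smul_of_nonneg_right hc' hB).trans h
    _ = a • A + b • P := by rw [one_smul]

theorem add_smul_le_smul_add_smul_of_le_smul (hB : 0 ≤ B) (hP : 0 ≤ P) (ha : 0 ≤ a)
    (hb : 0 ≤ b) (hc : c ≤ c') (hc'1 : 1 ≤ c') (h : A ≤ c • B) :
    a • A + b • P ≤ c' • (a • B + b • P) := by
  calc a • A + b • P = a • A + (1 : ℝ) • (b • P) := by rw [one_smul]
    _ ≤ a • (c' • B) + c' • (b • P) := by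
        gcongr
        exact h.trans (smul_le_smul_of_nonneg_right hc hB)
    _ = c' • (a • B + b • P) := by rw [smul_add, smul_comm c' a]

end OrderedModule

section matNorm

variable {d : ℕ} {A B : Matrix (Fin d) (Fin d) ℝ}

theorem matNorm_le_of_le (h : A ≤ B) (w : Fin d → ℝ) : matNorm A w ≤ matNorm B w := by
  refine Real.sqrt_le_sqrt ?_
  simpa only [star_trivial, sub_mulVec, dotProduct_sub, sub_nonneg] using
    (le_iff.mp h).dotProduct_mulVec_nonneg w

theorem matNorm_smul {c : ℝ} (hc : 0 ≤ c) (M : Matrix (Fin d) (Fin d) ℝ) (w : Fin d → ℝ) :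
    matNorm (c • M) w = √c * matNorm M w := by
  rw [matNorm, matNorm, smul_mulVec, dotProduct_smul, smul_eq_mul, Real.sqrt_mul hc]

theorem matNorm_le_sqrt_mul_of_le_smul {c : ℝ} (hc : 0 ≤ c) (h : A ≤ c • B) (w : Fin d → ℝ) :
    matNorm A w ≤ √c * matNorm B w :=
  matNorm_smul hc B w ▸ matNorm_le_of_le h w

end matNorm

theorem regularized_local_psd_approx_general {d : ℕ} (K : Set (Fin d → ℝ))
    (H : (Fin d → ℝ) → Matrix (Fin d) (Fin d) ℝ)
    (hPD : ∀ x ∈ K, (H x).PosDef)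
    (hsc : ∀ u ∈ K, ∀ v ∈ K, matNorm (H u) (u - v) ≤ 1 →
      ((H u) - (1 - matNorm (H u) (u - v)) ^ 2 • (H v)).PosSemidef ∧
      ((1 + matNorm (H u) (u - v)) ^ 2 • (H v) - H u).PosSemidef)
    (α η : ℝ) (hα : α ∈ Set.Ioo (0 : ℝ) 1) (hη : 0 < η)
    (Φ : (Fin d → ℝ) → Matrix (Fin d) (Fin d) ℝ)
    (hΦ : ∀ u, Φ u = α⁻¹ • H u + η⁻¹ • (1 : Matrix (Fin d) (Fin d) ℝ))
    (u v : Fin d → ℝ) (hu : u ∈ K) (hv : v ∈ K)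
    (hclose : matNorm (Φ u) (u - v) ≤ 1 / Real.sqrt α) :
    ((Φ u) - (1 - Real.sqrt α * matNorm (Φ u) (u - v)) ^ 2 • (Φ v)).PosSemidef ∧
    ((1 + Real.sqrt α * matNorm (Φ u) (u - v)) ^ 2 • (Φ v) - Φ u).PosSemidef := by
  have hα0 : 0 < α := hα.1
  have hHv : 0 ≤ H v := (hPD v hv).posSemidef.nonneg
  have hI : (0 : Matrix (Fin d) (Fin d) ℝ) ≤ 1 := PosSemidef.one.nonneg
  have hHΦ : H u ≤ α • Φ u := by
    rw [hΦ, smul_add, smul_inv_smul₀ hα0.ne']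
    exact le_add_of_nonneg_right (smul_nonneg hα0.le (smul_nonneg (inv_nonneg.2 hη.le) hI))
  set s := √α * matNorm (Φ u) (u - v)
  set t := matNorm (H u) (u - v)
  have ht : 0 ≤ t := Real.sqrt_nonneg _
  have hts : t ≤ s := matNorm_le_sqrt_mul_of_le_smul hα0.le hHΦ _
  have hs : s ≤ 1 := by
    rwa [le_div_iff₀' (Real.sqrt_pos.mpr hα0)] at hclose
  obtain ⟨hlo, hhi⟩ := hsc u hu v hv (hts.trans hs)
  rw [hΦ u, hΦ v]
  constructor
  · refine le_iff.mp (smul_add_smul_le_add_smul_of_smul_le hHv hI (by positivity)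
      (by positivity) ?_ ?_ (le_iff.mpr hlo))
    · exact pow_le_pow_left₀ (by linarith) (by linarith) 2
    · exact pow_le_one₀ (by linarith) (by linarith)
  · refine le_iff.mp (add_smul_le_smul_add_smul_of_le_smul hHv hI (by positivity)
      (by positivity) ?_ ?_ (le_iff.mpr hhi))
    · exact pow_le_pow_left₀ (by linarith) (by linarith) 2
    · exact one_le_pow₀ (by linarith)

/-- Local PSD approximation for a regularized self-concordant matrix function:
if `H` is self-concordant on `K` and `Φ(u) = α⁻¹ H(u) + η⁻¹ I`, then for
`u, v ∈ K` with `‖u - v‖_{Φ(u)} ≤ 1/√α`,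
`(1 - √α ‖u-v‖_{Φ(u)})² Φ(v) ⪯ Φ(u) ⪯ (1 + √α ‖u-v‖_{Φ(u)})² Φ(v)`. -/
theorem regularized_local_psd_approx {d : ℕ} (K : Set (Fin d → ℝ)) (hK : Convex ℝ K)
    (H : (Fin d → ℝ) → Matrix (Fin d) (Fin d) ℝ)
    (hPD : ∀ x ∈ K, (H x).PosDef)
    (hsc : ∀ u ∈ K, ∀ v ∈ K, matNorm (H u) (u - v) ≤ 1 →
      ((H u) - (1 - matNorm (H u) (u - v)) ^ 2 • (H v)).PosSemidef ∧
      ((1 + matNorm (H u) (u - v)) ^ 2 • (H v) - H u).PosSemidef)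
    (α η : ℝ) (hα : α ∈ Set.Ioo (0 : ℝ) 1) (hη : 0 < η)
    (Φ : (Fin d → ℝ) → Matrix (Fin d) (Fin d) ℝ)
    (hΦ : ∀ u, Φ u = α⁻¹ • H u + η⁻¹ • (1 : Matrix (Fin d) (Fin d) ℝ))
    (u v : Fin d → ℝ) (hu : u ∈ K) (hv : v ∈ K)
    (hclose : matNorm (Φ u) (u - v) ≤ 1 / Real.sqrt α) :
    ((Φ u) - (1 - Real.sqrt α * matNorm (Φ u) (u - v)) ^ 2 • (Φ v)).PosSemidef ∧
    ((1 + Real.sqrt α * matNorm (Φ u) (u - v)) ^ 2 • (Φ v) - Φ u).PosSemidef :=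
  regularized_local_psd_approx_general K H hPD hsc α η hα hη Φ hΦ u v hu hv hclose
end

section
/- Let A in R^{n x d}, let S_x = diag(Ax - b) be invertible, let H(x) = A^T S_x^{-2} A, and define the regularized leverage scores sigma-tilde_i = a_i^T (H(x)+I_d)^{-1} a_i / s_{x,i}^2, cross terms sigma-tilde_{i,j} = a_i^T (H(x)+I_d)^{-1} a_j/(s_{x,i} s_{x,j}), and sigma-hat_i = a_i^T (H(x)+I_d)^{-2} a_i / s_{x,i}^2. Then sigma-tilde_i = sigma-hat_i + sum_{j=1}^n sigma-tilde_{i,j}^2. -/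
open Matrix

/-!
Write `P = (H + I)⁻¹`. Multiplying `H + I = I + H` by `P` on both sides gives
`P = P² + P H P`. Since `H = Aᵀ S⁻² A` is symmetric, so is `P`, and the quadratic form of
`P H P` at `aᵢ` is `(P aᵢ)ᵀ Aᵀ S⁻² A (P aᵢ) = ∑ⱼ (aᵢᵀ P aⱼ)² / sⱼ²`; dividing by `sᵢ²` yields the
identity.
-/

namespace Matrix

variable {m n R : Type*}

theorem dotProduct_mulVec_comm_of_transpose_eq [Fintype n] [CommSemiring R]
    {P : Matrix n n R} (hP : Pᵀ = P) (u v : n → R) : u ⬝ᵥ P *ᵥ v = v ⬝ᵥ P *ᵥ u := by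
  rw [dotProduct_mulVec, ← mulVec_transpose, hP, dotProduct_comm]

theorem transpose_mul_diagonal_mul_self_transpose [Fintype m] [DecidableEq m] [CommSemiring R]
    (A : Matrix m n R) (w : m → R) : (Aᵀ * diagonal w * A)ᵀ = Aᵀ * diagonal w * A := by
  rw [transpose_mul, transpose_mul, diagonal_transpose, transpose_transpose, Matrix.mul_assoc]

theorem dotProduct_transpose_mul_diagonal_mul_mulVec [Fintype m] [Fintype n] [DecidableEq m]
    [CommSemiring R] (A : Matrix m n R) (w : m → R) (u : n → R) :
    u ⬝ᵥ (Aᵀ * diagonal w * A) *ᵥ u = ∑ j, w j * (A j ⬝ᵥ u) ^ 2 := by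
  rw [← mulVec_mulVec, ← mulVec_mulVec, dotProduct_mulVec, ← mulVec_transpose,
    transpose_transpose]
  exact Finset.sum_congr rfl fun j _ => by rw [mulVec_diagonal, mulVec]; ring

theorem nonsing_inv_mul_mul_nonsing_inv [Fintype n] [DecidableEq n] [CommRing R]
    (M : Matrix n n R) : M⁻¹ * M * M⁻¹ = M⁻¹ := by
  by_cases h : IsUnit M.det
  · rw [nonsing_inv_mul M h, Matrix.one_mul]
  · rw [nonsing_inv_apply_not_isUnit M h, Matrix.zero_mul, Matrix.zero_mul]

theorem inv_add_one_eq_mul_add_mul_mul [Fintype n] [DecidableEq n] [CommRing R]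
    (H : Matrix n n R) :
    (H + 1)⁻¹ = (H + 1)⁻¹ * (H + 1)⁻¹ + (H + 1)⁻¹ * H * (H + 1)⁻¹ :=
  calc (H + 1)⁻¹ = (H + 1)⁻¹ * (1 + H) * (H + 1)⁻¹ := by
        rw [add_comm 1 H, nonsing_inv_mul_mul_nonsing_inv]
    _ = (H + 1)⁻¹ * (H + 1)⁻¹ + (H + 1)⁻¹ * H * (H + 1)⁻¹ := by
        rw [Matrix.mul_add, Matrix.mul_one, Matrix.add_mul]

end Matrix

theorem regularized_leverage_identity_of_weights {m n R : Type*} [Fintype m] [Fintype n]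
    [DecidableEq m] [DecidableEq n] [CommRing R] (A : Matrix m n R) (w : m → R)
    (H : Matrix n n R) (hH : H = Aᵀ * diagonal w * A) (i : m) :
    A i ⬝ᵥ (H + 1)⁻¹ *ᵥ A i
      = A i ⬝ᵥ ((H + 1)⁻¹ * (H + 1)⁻¹) *ᵥ A i + ∑ j, w j * (A i ⬝ᵥ (H + 1)⁻¹ *ᵥ A j) ^ 2 := by
  have hquad (u : n → R) : u ⬝ᵥ H *ᵥ u = ∑ j, w j * (A j ⬝ᵥ u) ^ 2 := by
    rw [hH, dotProduct_transpose_mul_diagonal_mul_mulVec]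
  have hP : (H + 1)⁻¹ᵀ = (H + 1)⁻¹ := by
    rw [transpose_nonsing_inv, transpose_add, transpose_one, hH,
      transpose_mul_diagonal_mul_self_transpose]
  have hPHP : A i ⬝ᵥ ((H + 1)⁻¹ * H * (H + 1)⁻¹) *ᵥ A i
      = ∑ j, w j * (A i ⬝ᵥ (H + 1)⁻¹ *ᵥ A j) ^ 2 := by
    rw [← mulVec_mulVec, ← mulVec_mulVec, dotProduct_mulVec_comm_of_transpose_eq hP,
      dotProduct_comm, hquad]
    exact Finset.sum_congr rfl fun j _ => by rw [dotProduct_mulVec_comm_of_transpose_eq hP]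
  conv_lhs => rw [inv_add_one_eq_mul_add_mul_mul H]
  rw [add_mulVec, dotProduct_add, hPHP]

theorem regularized_leverage_identity_general {n d : ℕ}
    (A : Matrix (Fin n) (Fin d) ℝ)
    (s : Fin n → ℝ)
    (H : Matrix (Fin d) (Fin d) ℝ)
    (hH : H = Aᵀ * Matrix.diagonal (fun i => ((s i) ^ 2)⁻¹) * A) :
    ∀ i : Fin n,
      (A i) ⬝ᵥ ((H + 1)⁻¹.mulVec (A i)) / (s i) ^ 2
        = (A i) ⬝ᵥ (((H + 1)⁻¹ * (H + 1)⁻¹).mulVec (A i)) / (s i) ^ 2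
          + ∑ j : Fin n, ((A i) ⬝ᵥ ((H + 1)⁻¹.mulVec (A j)) / (s i * s j)) ^ 2 := by
  intro i
  rw [regularized_leverage_identity_of_weights A _ H hH i, add_div, Finset.sum_div]
  congr 1
  refine Finset.sum_congr rfl fun j _ => ?_
  rw [div_pow, mul_pow]
  ring

/-- Regularized leverage score identity: with `H(x) = Aᵀ S_x⁻² A`,
`σ̃ᵢ = aᵢᵀ(H+I)⁻¹aᵢ/s_i²`, `σ̃ᵢⱼ = aᵢᵀ(H+I)⁻¹aⱼ/(s_i s_j)`,
`σ̂ᵢ = aᵢᵀ(H+I)⁻²aᵢ/s_i²`, we have `σ̃ᵢ = σ̂ᵢ + ∑ⱼ σ̃ᵢⱼ²`. -/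
theorem regularized_leverage_identity {n d : ℕ}
    (A : Matrix (Fin n) (Fin d) ℝ) (x : Fin d → ℝ) (b : Fin n → ℝ)
    (s : Fin n → ℝ) (hs : s = A.mulVec x - b) (hs0 : ∀ i, s i ≠ 0)
    (H : Matrix (Fin d) (Fin d) ℝ)
    (hH : H = Aᵀ * Matrix.diagonal (fun i => ((s i) ^ 2)⁻¹) * A) :
    ∀ i : Fin n,
      (A i) ⬝ᵥ ((H + 1)⁻¹.mulVec (A i)) / (s i) ^ 2
        = (A i) ⬝ᵥ (((H + 1)⁻¹ * (H + 1)⁻¹).mulVec (A i)) / (s i) ^ 2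
          + ∑ j : Fin n, ((A i) ⬝ᵥ ((H + 1)⁻¹.mulVec (A j)) / (s i * s j)) ^ 2 :=
  regularized_leverage_identity_general A s H hH
end

section
/- Let K be a spectrahedron {x : sum_i x_i A_i >= C} with A_i, C symmetric n x n, and H_log(x) = A-sf (S(x)^{-1} ⊗ S(x)^{-1}) A-sf^T the Hessian of the log barrier -log det S(x). Then H_log is n-symmetric: for every x in the interior of K, E_x(1) ⊆ K ∩ (2x - K) ⊆ E_x(sqrt(n)), where E_x(r) = {y : (y-x)^T H_log(x) (y-x) <= r^2}. -/
/-!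
Put `S = S(x)` and `D = ∑ᵢ (yᵢ - xᵢ) Aᵢ`. The Hessian form is
`(y - x)ᵀ H_log(x) (y - x) = tr (D S⁻¹ D S⁻¹) = ‖M‖_F²` with `M = S^{-1/2} D S^{-1/2}`,
while `y ∈ K ∩ (2x - K)` means `S ± D ⪰ 0`, i.e. `-1 ⪯ M ⪯ 1`.
If `‖M‖_F ≤ 1` then Cauchy–Schwarz gives `|wᵀ M w| ≤ wᵀ w`, so `-1 ⪯ M ⪯ 1`.
Conversely, if `1 ± M ⪰ 0` then `0 ≤ tr ((1 - M)(1 + M)) = n - ‖M‖_F²`.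
-/

open Matrix Kronecker

section Pencil

variable {ι R M : Type*} [Fintype ι] [Ring R] [AddCommGroup M] [Module R M]
  (f : ι → M) (c : M) (x y : ι → R)

theorem sum_smul_sub_eq_add_sum_sub_smul :
    ∑ i, y i • f i - c = (∑ i, x i • f i - c) + ∑ i, (y - x) i • f i := by
  simp only [Pi.sub_apply, sub_smul, Finset.sum_sub_distrib]
  abel

theorem sum_two_smul_sub_smul_sub_eq_sub_sum_sub_smul :
    ∑ i, ((2 : R) • x - y) i • f i - c = (∑ i, x i • f i - c) - ∑ i, (y - x) i • f i := by
  simp only [two_smul, Pi.sub_apply, Pi.add_apply, sub_smul, add_smul, Finset.sum_sub_distrib,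
    Finset.sum_add_distrib]
  abel

end Pencil

namespace Matrix

variable {n : Type*} [Fintype n]

open scoped MatrixOrder ComplexOrder in
theorem PosSemidef.trace_mul_nonneg {𝕜 : Type*} [RCLike 𝕜] {X Y : Matrix n n 𝕜}
    (hX : X.PosSemidef) (hY : Y.PosSemidef) : 0 ≤ (X * Y).trace := by
  classical
  obtain ⟨B, rfl⟩ := CStarAlgebra.nonneg_iff_eq_star_mul_self.mp hX.nonneg
  rw [mul_assoc, trace_mul_comm, mul_assoc, star_eq_conjTranspose, ← mul_assoc]
  exact (hY.mul_mul_conjTranspose_same B).trace_nonneg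

theorem sq_dotProduct_mulVec_le_trace_mul_transpose {R : Type*} [CommRing R] [LinearOrder R]
    [IsStrictOrderedRing R] (M : Matrix n n R) (w : n → R) :
    (w ⬝ᵥ M *ᵥ w) ^ 2 ≤ (M * Mᵀ).trace * (w ⬝ᵥ w) ^ 2 := by
  have hM : w ⬝ᵥ M *ᵥ w = ∑ p : n × n, M p.1 p.2 * (w p.1 * w p.2) := by
    simp only [dotProduct, mulVec, Fintype.sum_prod_type, Finset.mul_sum]
    exact Finset.sum_congr rfl fun _ _ => Finset.sum_congr rfl fun _ _ => by ring
  have hMM : (M * Mᵀ).trace = ∑ p : n × n, M p.1 p.2 ^ 2 := by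
    simp [trace, mul_apply, Fintype.sum_prod_type, sq]
  have hw : (w ⬝ᵥ w) ^ 2 = ∑ p : n × n, (w p.1 * w p.2) ^ 2 := by
    simp [dotProduct, sq, Fintype.sum_prod_type, Finset.sum_mul_sum, mul_mul_mul_comm]
  rw [hM, hMM, hw]
  exact Finset.sum_mul_sq_le_sq_mul_sq _ _ _

theorem dotProduct_mulVec_transpose_mul_mul {R : Type*} [CommSemiring R] (B M : Matrix n n R)
    (v : n → R) : v ⬝ᵥ (Bᵀ * M * B) *ᵥ v = (B *ᵥ v) ⬝ᵥ M *ᵥ (B *ᵥ v) := by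
  rw [← mulVec_mulVec, ← mulVec_mulVec, dotProduct_mulVec, vecMul_transpose]

theorem dotProduct_mulVec_mul_kronecker_mul_transpose {R m d : Type*} [CommSemiring R]
    [Fintype m] [Fintype d] (A : d → Matrix m m R) (𝒜 : Matrix d (m × m) R)
    (h𝒜 : ∀ i p, 𝒜 i p = A i p.1 p.2) (P Q : Matrix m m R) (Δ : d → R) :
    Δ ⬝ᵥ (𝒜 * (P ⊗ₖ Q) * 𝒜ᵀ) *ᵥ Δ
      = ((∑ i, Δ i • A i) * Q * (∑ i, Δ i • A i)ᵀ * Pᵀ).trace := by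
  have hvec : 𝒜ᵀ *ᵥ Δ = vec (∑ i, Δ i • A i)ᵀ := by
    ext ⟨a, b⟩
    simp [mulVec, dotProduct, h𝒜, Matrix.sum_apply, mul_comm]
  rw [← mulVec_mulVec, ← mulVec_mulVec, dotProduct_mulVec, ← mulVec_transpose, hvec,
    kronecker_mulVec_vec, vec_dotProduct_vec, transpose_transpose]
  simp only [mul_assoc]

variable [DecidableEq n]

open scoped MatrixOrder in
/-- Writing `S = Bᵀ B` with `B` invertible reduces this to the case `S = 1`, with `D`
replaced by `B⁻ᵀ D B⁻¹`. -/
theorem PosDef.sq_dotProduct_mulVec_le {S : Matrix n n ℝ} (hS : S.PosDef) (D : Matrix n n ℝ)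
    (v : n → ℝ) :
    (v ⬝ᵥ D *ᵥ v) ^ 2 ≤ (D * S⁻¹ * Dᵀ * S⁻¹).trace * (v ⬝ᵥ S *ᵥ v) ^ 2 := by
  obtain ⟨B, hB, rfl⟩ := CStarAlgebra.isStrictlyPositive_iff_eq_star_mul_self.mp
    hS.isStrictlyPositive
  rw [star_eq_conjTranspose, conjTranspose_eq_transpose_of_trivial]
  have hB : IsUnit B.det := (isUnit_iff_isUnit_det B).mp hB
  have hD : D = Bᵀ * (B⁻¹ᵀ * D * B⁻¹) * B := by
    rw [← mul_assoc, ← mul_assoc, ← transpose_mul, nonsing_inv_mul _ hB, transpose_one, one_mul,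
      mul_assoc, nonsing_inv_mul _ hB, mul_one]
  have hquad : v ⬝ᵥ D *ᵥ v = (B *ᵥ v) ⬝ᵥ (B⁻¹ᵀ * D * B⁻¹) *ᵥ (B *ᵥ v) := by
    rw [← dotProduct_mulVec_transpose_mul_mul, ← hD]
  have hnorm : v ⬝ᵥ (Bᵀ * B) *ᵥ v = (B *ᵥ v) ⬝ᵥ (B *ᵥ v) := by
    simpa using dotProduct_mulVec_transpose_mul_mul B 1 v
  have htrace : (D * (Bᵀ * B)⁻¹ * Dᵀ * (Bᵀ * B)⁻¹).trace
      = ((B⁻¹ᵀ * D * B⁻¹) * (B⁻¹ᵀ * D * B⁻¹)ᵀ).trace := by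
    simp only [mul_inv_rev, ← transpose_nonsing_inv, transpose_mul, transpose_transpose, mul_assoc]
    rw [trace_mul_comm B⁻¹ᵀ]
    simp only [mul_assoc]
  rw [hquad, hnorm, htrace]
  exact sq_dotProduct_mulVec_le_trace_mul_transpose _ _

theorem PosDef.posSemidef_add_and_sub_of_trace_le_one {S D : Matrix n n ℝ} (hS : S.PosDef)
    (hD : D.IsHermitian) (h : (D * S⁻¹ * Dᵀ * S⁻¹).trace ≤ 1) :
    (S + D).PosSemidef ∧ (S - D).PosSemidef := by
  have habs (v : n → ℝ) : |v ⬝ᵥ D *ᵥ v| ≤ v ⬝ᵥ S *ᵥ v := by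
    have hS_v : 0 ≤ v ⬝ᵥ S *ᵥ v := by simpa using hS.posSemidef.dotProduct_mulVec_nonneg v
    refine abs_le_of_sq_le_sq ?_ hS_v
    exact (hS.sq_dotProduct_mulVec_le D v).trans (mul_le_of_le_one_left (sq_nonneg _) h)
  refine ⟨.of_dotProduct_mulVec_nonneg (hS.isHermitian.add hD) fun v => ?_,
    .of_dotProduct_mulVec_nonneg (hS.isHermitian.sub hD) fun v => ?_⟩
  · rw [star_trivial, add_mulVec, dotProduct_add]
    linarith [neg_abs_le (v ⬝ᵥ D *ᵥ v), habs v]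
  · rw [star_trivial, sub_mulVec, dotProduct_sub]
    linarith [le_abs_self (v ⬝ᵥ D *ᵥ v), habs v]

theorem PosDef.trace_le_card_of_posSemidef_add_of_posSemidef_sub {S D : Matrix n n ℝ}
    (hS : S.PosDef) (hadd : (S + D).PosSemidef) (hsub : (S - D).PosSemidef) :
    (D * S⁻¹ * Dᵀ * S⁻¹).trace ≤ Fintype.card n := by
  have hDt : Dᵀ = D := by simpa using (hadd.isHermitian.sub hS.isHermitian).eq
  have hSS : S * S⁻¹ = 1 := mul_nonsing_inv _ ((isUnit_iff_isUnit_det S).mp hS.isUnit)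
  have hconj : (S⁻¹ * (S + D) * S⁻¹).PosSemidef := by
    have := hadd.mul_mul_conjTranspose_same S⁻¹
    rwa [hS.inv.isHermitian.eq] at this
  have hprod : (S - D) * (S⁻¹ * (S + D) * S⁻¹) = 1 - D * S⁻¹ * D * S⁻¹ := by
    have : (S - D) * (S⁻¹ * (S + D) * S⁻¹) = (1 - D * S⁻¹) * (1 + D * S⁻¹) := by
      rw [← hSS]; simp only [mul_assoc, sub_mul, add_mul]
    rw [this]; noncomm_ring
  have := hsub.trace_mul_nonneg hconj
  rw [hprod, trace_sub, trace_one] at this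
  rw [hDt]
  linarith

end Matrix

theorem spectrahedron_logbarrier_n_symmetry_general {n d : ℕ}
    (A : Fin d → Matrix (Fin n) (Fin n) ℝ) (hA : ∀ i, (A i).IsSymm)
    (C : Matrix (Fin n) (Fin n) ℝ)
    (𝒜 : Matrix (Fin d) (Fin n × Fin n) ℝ)
    (h𝒜 : ∀ i p, 𝒜 i p = A i p.1 p.2)
    (x : Fin d → ℝ) (hx : (∑ i, x i • A i - C).PosDef)
    (K : Set (Fin d → ℝ)) (hK : K = {z | (∑ i, z i • A i - C).PosSemidef}) :
    letI S : Matrix (Fin n) (Fin n) ℝ := ∑ i, x i • A i - C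
    letI Hlog : Matrix (Fin d) (Fin d) ℝ := 𝒜 * (S⁻¹ ⊗ₖ S⁻¹) * 𝒜ᵀ
    letI E : ℝ → Set (Fin d → ℝ) :=
      fun r => {y | (y - x) ⬝ᵥ Hlog.mulVec (y - x) ≤ r ^ 2}
    E 1 ⊆ K ∩ {z | ∃ u ∈ K, z = (2 : ℝ) • x - u} ∧
    K ∩ {z | ∃ u ∈ K, z = (2 : ℝ) • x - u} ⊆ E (Real.sqrt n) := by
  set S := ∑ i, x i • A i - C
  beta_reduce
  let D (y : Fin d → ℝ) : Matrix (Fin n) (Fin n) ℝ := ∑ i, (y - x) i • A i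
  have hD (y : Fin d → ℝ) : (D y).IsHermitian := by
    rw [IsHermitian, conjTranspose_eq_transpose_of_trivial]
    simp [D, transpose_sum, (hA _).eq]
  have hSinv : S⁻¹ᵀ = S⁻¹ :=
    (conjTranspose_eq_transpose_of_trivial _).symm.trans hx.inv.isHermitian.eq
  have hHlog (y : Fin d → ℝ) : (y - x) ⬝ᵥ (𝒜 * (S⁻¹ ⊗ₖ S⁻¹) * 𝒜ᵀ) *ᵥ (y - x)
      = (D y * S⁻¹ * (D y)ᵀ * S⁻¹).trace := by
    rw [dotProduct_mulVec_mul_kronecker_mul_transpose A 𝒜 h𝒜, hSinv]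
  have hmem (y : Fin d → ℝ) : y ∈ K ∩ {z | ∃ u ∈ K, z = (2 : ℝ) • x - u} ↔
      (S + D y).PosSemidef ∧ (S - D y).PosSemidef := by
    have hreflect : (∃ u ∈ K, y = (2 : ℝ) • x - u) ↔ (2 : ℝ) • x - y ∈ K :=
      ⟨by rintro ⟨u, hu, rfl⟩; simpa using hu, fun h => ⟨_, h, (sub_sub_cancel _ _).symm⟩⟩
    rw [Set.mem_inter_iff, Set.mem_ofPred_eq, hreflect, hK, Set.mem_ofPred_eq, Set.mem_ofPred_eq,
      sum_smul_sub_eq_add_sum_sub_smul A C x, sum_two_smul_sub_smul_sub_eq_sub_sum_sub_smul]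
  refine ⟨fun y hy => (hmem y).2 ?_, fun y hy => ?_⟩
  · exact hx.posSemidef_add_and_sub_of_trace_le_one (hD y) (by simpa [hHlog] using hy)
  · obtain ⟨hadd, hsub⟩ := (hmem y).1 hy
    rw [Set.mem_ofPred_eq, hHlog, Real.sq_sqrt n.cast_nonneg]
    simpa using hx.trace_le_card_of_posSemidef_add_of_posSemidef_sub hadd hsub

/-- n-symmetry of the spectrahedron log-barrier Hessian: for `x` in the interior of
`K = {z : ∑ᵢ zᵢ Aᵢ ⪰ C}`, with `H_log(x) = 𝒜 (S(x)⁻¹ ⊗ S(x)⁻¹) 𝒜ᵀ`,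
`E_x(1) ⊆ K ∩ (2x - K) ⊆ E_x(√n)` where `E_x(r) = {y : (y-x)ᵀ H_log(x) (y-x) ≤ r²}`. -/
theorem spectrahedron_logbarrier_n_symmetry {n d : ℕ}
    (A : Fin d → Matrix (Fin n) (Fin n) ℝ) (hA : ∀ i, (A i).IsSymm)
    (C : Matrix (Fin n) (Fin n) ℝ) (hC : C.IsSymm)
    (𝒜 : Matrix (Fin d) (Fin n × Fin n) ℝ)
    (h𝒜 : ∀ i p, 𝒜 i p = A i p.1 p.2)
    (x : Fin d → ℝ) (hx : (∑ i, x i • A i - C).PosDef)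
    (K : Set (Fin d → ℝ)) (hK : K = {z | (∑ i, z i • A i - C).PosSemidef}) :
    letI S : Matrix (Fin n) (Fin n) ℝ := ∑ i, x i • A i - C
    letI Hlog : Matrix (Fin d) (Fin d) ℝ := 𝒜 * (S⁻¹ ⊗ₖ S⁻¹) * 𝒜ᵀ
    letI E : ℝ → Set (Fin d → ℝ) :=
      fun r => {y | (y - x) ⬝ᵥ Hlog.mulVec (y - x) ≤ r ^ 2}
    E 1 ⊆ K ∩ {z | ∃ u ∈ K, z = (2 : ℝ) • x - u} ∧
    K ∩ {z | ∃ u ∈ K, z = (2 : ℝ) • x - u} ⊆ E (Real.sqrt n) :=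
  spectrahedron_logbarrier_n_symmetry_general A hA C 𝒜 h𝒜 x hx K hK
end

section
/- Let P be a symmetric positive semidefinite n^2 x n^2 matrix with P <= P-bar for an orthogonal projection P-bar, and let B-bar be symmetric n x n. Then trace[P (B-bar ⊗_S I)(P)(B-bar ⊗_S I)] <= (1/2) trace[P ((B-bar^2 ⊗_S I) + (B-bar ⊗ B-bar))], where B-bar ⊗_S I = (1/2)(B-bar ⊗ I + I ⊗ B-bar); consequently the quantity T(xi) = <P, (B-bar ⊗_S I) P (B-bar ⊗_S I)> is at most (Q(xi) + R(xi))/2 with Q(xi) = <P, B-bar^2 ⊗_S I> and R(xi) = <P, B-bar ⊗ B-bar>. -/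
/-!
Since `P̄` is an orthogonal projection, `0 ≤ P ≤ P̄ ≤ 1` in the Loewner order; conjugating by the
symmetric matrix `S = B̄ ⊗_S I` gives `S P S ≤ S²`, and `X ↦ tr[P X]` is monotone because the trace
of a product of two positive semidefinite matrices is nonnegative. Finally
`S² = (1/2)((B̄² ⊗_S I) + B̄ ⊗ B̄)`, as the two cross terms of `(B̄ ⊗ I + I ⊗ B̄)²` both equal `B̄ ⊗ B̄`.
-/

open Matrix Kronecker

open scoped MatrixOrder ComplexOrder

namespace Matrix

variable {m n 𝕜 : Type*} [Fintype m] [DecidableEq m] [RCLike 𝕜]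

theorem trace_mul_nonneg {A D : Matrix m m 𝕜} (hA : 0 ≤ A) (hD : 0 ≤ D) :
    0 ≤ (A * D).trace := by
  have hconj : 0 ≤ star (CFC.sqrt A) * D * CFC.sqrt A := star_left_conjugate_nonneg hD _
  rw [(CFC.sqrt_nonneg A).isSelfAdjoint.star_eq] at hconj
  calc 0 ≤ (CFC.sqrt A * D * CFC.sqrt A).trace := hconj.posSemidef.trace_nonneg
    _ = (A * D).trace := by rw [trace_mul_cycle, CFC.sqrt_mul_sqrt_self A hA]

theorem trace_mul_le_trace_mul {A X Y : Matrix m m 𝕜} (hA : 0 ≤ A) (hXY : X ≤ Y) :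
    (A * X).trace ≤ (A * Y).trace := by
  have := trace_mul_nonneg hA (sub_nonneg.2 hXY)
  rwa [Matrix.mul_sub, trace_sub, sub_nonneg] at this

theorem trace_mul_conj_le_trace_mul_sq_of_le_one {P S : Matrix m m 𝕜} (hP₀ : 0 ≤ P)
    (hP₁ : P ≤ 1) (hS : IsSelfAdjoint S) :
    (P * S * P * S).trace ≤ (P * (S * S)).trace := by
  have hconj : S * P * S ≤ S * 1 * S := hS.conjugate_le_conjugate hP₁
  simpa only [Matrix.mul_one, Matrix.mul_assoc] using trace_mul_le_trace_mul hP₀ hconj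

def symmKronecker (A C : Matrix n n 𝕜) : Matrix (n × n) (n × n) 𝕜 :=
  (1 / 2 : 𝕜) • (A ⊗ₖ C + C ⊗ₖ A)

theorem IsHermitian.symmKronecker {A C : Matrix n n 𝕜} (hA : A.IsHermitian)
    (hC : C.IsHermitian) : (symmKronecker A C).IsHermitian := by
  simp [Matrix.symmKronecker, IsHermitian, conjTranspose_kronecker, hA.eq, hC.eq]

theorem symmKronecker_one_mul_self [Fintype n] [DecidableEq n] (B : Matrix n n 𝕜) :
    symmKronecker B 1 * symmKronecker B 1 = (1 / 2 : 𝕜) • (symmKronecker (B * B) 1 + B ⊗ₖ B) := by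
  simp only [symmKronecker, Matrix.smul_mul, Matrix.mul_smul, Matrix.add_mul, Matrix.mul_add,
    ← Matrix.mul_kronecker_mul, Matrix.one_mul, Matrix.mul_one, smul_add, smul_smul]
  module

end Matrix

/-- Trace inequality for matrices dominated by a projection: if `0 ⪯ P ⪯ P̄` with `P̄`
an orthogonal projection and `B̄` symmetric, then with `B̄ ⊗_S I = (1/2)(B̄⊗I + I⊗B̄)`,
`tr[P (B̄⊗_S I) P (B̄⊗_S I)] ≤ (1/2) tr[P ((B̄²⊗_S I) + (B̄⊗B̄))]`. -/
theorem trace_projection_inequality {n : ℕ}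
    (P Pbar : Matrix (Fin n × Fin n) (Fin n × Fin n) ℝ)
    (hP : P.PosSemidef) (hPbar1 : Pbar.IsSymm) (hPbar2 : Pbar * Pbar = Pbar)
    (hle : (Pbar - P).PosSemidef)
    (B : Matrix (Fin n) (Fin n) ℝ) (hB : B.IsSymm) :
    letI BS : Matrix (Fin n × Fin n) (Fin n × Fin n) ℝ :=
      (1 / 2 : ℝ) • (B ⊗ₖ (1 : Matrix (Fin n) (Fin n) ℝ)
        + (1 : Matrix (Fin n) (Fin n) ℝ) ⊗ₖ B)
    (P * BS * P * BS).trace ≤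
      (1 / 2 : ℝ) * (P * ((1 / 2 : ℝ) • ((B * B) ⊗ₖ (1 : Matrix (Fin n) (Fin n) ℝ)
          + (1 : Matrix (Fin n) (Fin n) ℝ) ⊗ₖ (B * B)) + B ⊗ₖ B)).trace := by
  show (P * symmKronecker B 1 * P * symmKronecker B 1).trace ≤
    1 / 2 * (P * (symmKronecker (B * B) 1 + B ⊗ₖ B)).trace
  have hPbar : IsStarProjection Pbar := ⟨hPbar2, (isHermitian_iff_isSymm.2 hPbar1).isSelfAdjoint⟩
  have hP₁ : P ≤ 1 := (le_iff.2 hle).trans hPbar.le_one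
  have hBS := ((isHermitian_iff_isSymm.2 hB).symmKronecker isHermitian_one).isSelfAdjoint
  calc (P * symmKronecker B 1 * P * symmKronecker B 1).trace
      ≤ (P * (symmKronecker B 1 * symmKronecker B 1)).trace :=
        trace_mul_conj_le_trace_mul_sq_of_le_one hP.nonneg hP₁ hBS
    _ = 1 / 2 * (P * (symmKronecker (B * B) 1 + B ⊗ₖ B)).trace := by
        rw [symmKronecker_one_mul_self, Matrix.mul_smul, trace_smul, smul_eq_mul]
end
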